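/- Let f : ℝⁿ → ℝ be differentiable with L-Lipschitz gradient, let x ∈ ℝⁿ and Δ > 0, and suppose that for every d ∈ G the inequality f(x) ≤ f(x + Δd) + Δ² holds. Then ‖[−∇f(x)]_{K°}‖ ≤ √n · (L + 1) · Δ. -/

import Mathlib

/-!
Failure of sufficient decrease along a unit generator `d`, together with the mean value bound
`f (x + Δ d) ≤ f x + Δ ⟪∇f x, d⟫ + L Δ²`, gives `⟪-∇f x, d⟫ ≤ (L + 1) Δ`. The generators are signed
coordinate vectors, so for `p ∈ K°` each term `v i * p i` of `⟪v, p⟫` equals `⟪v, d⟫ * |p i|` for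
some generator `d`; hence `⟪-∇f x, p⟫ ≤ (L + 1) Δ ‖p‖₁ ≤ √n (L + 1) Δ ‖p‖`. Since `0 ∈ K°` and `K°`
is convex, the projection `p` of `-∇f x` onto `K°` satisfies `‖p‖² ≤ ⟪-∇f x, p⟫`.
-/

open InnerProductSpace RealInnerProductSpace

section Descent

variable {E : Type*} [NormedAddCommGroup E] [InnerProductSpace ℝ E] [CompleteSpace E]
  {f : E → ℝ} {L : ℝ} {x : E}

theorem abs_sub_sub_inner_gradient_le (hf : Differentiable ℝ f) (hL : 0 ≤ L)
    (hLip : ∀ y, ‖gradient f y - gradient f x‖ ≤ L * ‖y - x‖) (h : E) :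
    |f (x + h) - f x - ⟪gradient f x, h⟫_ℝ| ≤ L * ‖h‖ ^ 2 := by
  have hderiv : ∀ z ∈ Metric.closedBall x ‖h‖, ‖fderiv ℝ f z - fderiv ℝ f x‖ ≤ L * ‖h‖ := by
    intro z hz
    rw [← toDual_gradient, ← toDual_gradient, ← map_sub, LinearIsometryEquiv.norm_map]
    exact (hLip z).trans (mul_le_mul_of_nonneg_left (mem_closedBall_iff_norm.mp hz) hL)
  have hmem : x + h ∈ Metric.closedBall x ‖h‖ := by simp
  have hmvt := (convex_closedBall x ‖h‖).norm_image_sub_le_of_norm_fderiv_le' (fun z _ => hf z)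
    hderiv (Metric.mem_closedBall_self (norm_nonneg h)) hmem
  rw [add_sub_cancel_left, ← toDual_gradient, toDual_apply_apply] at hmvt
  rwa [Real.norm_eq_abs, mul_assoc, ← sq] at hmvt

theorem inner_neg_gradient_le_of_le_add_sq (hf : Differentiable ℝ f) (hL : 0 ≤ L)
    (hLip : ∀ y, ‖gradient f y - gradient f x‖ ≤ L * ‖y - x‖) {d : E} (hd : ‖d‖ = 1)
    {Δ : ℝ} (hΔ : 0 < Δ) (hfail : f x ≤ f (x + Δ • d) + Δ ^ 2) :
    ⟪-gradient f x, d⟫_ℝ ≤ (L + 1) * Δ := by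
  have h := (abs_le.mp (abs_sub_sub_inner_gradient_le hf hL hLip (Δ • d))).2
  rw [norm_smul, hd, Real.norm_of_nonneg hΔ.le, real_inner_smul_right] at h
  rw [inner_neg_left]
  nlinarith

end Descent

theorem nonneg_of_forall_norm_sub_le_mul {E F : Type*} [NormedAddCommGroup E] [Nontrivial E]
    [NormedAddCommGroup F] {g : E → F} {L : ℝ} (hg : ∀ y z, ‖g y - g z‖ ≤ L * ‖y - z‖) :
    0 ≤ L := by
  obtain ⟨y, hy⟩ := exists_ne (0 : E)
  have := (norm_nonneg _).trans (hg y 0)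
  rw [sub_zero] at this
  exact nonneg_of_mul_nonneg_left this (norm_pos_iff.mpr hy)

theorem norm_sq_le_real_inner_of_isMinOn {F : Type*} [NormedAddCommGroup F]
    [InnerProductSpace ℝ F] {K : Set F} (hK : Convex ℝ K) (h0 : 0 ∈ K) {v p : F} (hp : p ∈ K)
    (hmin : ∀ q ∈ K, ‖v - p‖ ≤ ‖v - q‖) : ‖p‖ ^ 2 ≤ ⟪v, p⟫_ℝ := by
  have : Nonempty K := ⟨⟨p, hp⟩⟩
  have hinf : ‖v - p‖ = ⨅ q : K, ‖v - q‖ :=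
    le_antisymm (le_ciInf fun q => hmin q q.2)
      (ciInf_le ⟨0, Set.forall_mem_range.2 fun _ => norm_nonneg _⟩ (⟨p, hp⟩ : K))
  have := (norm_eq_iInf_iff_real_inner_le_zero hK hp).mp hinf 0 h0
  rw [zero_sub, inner_neg_right, inner_sub_left, real_inner_self_eq_norm_sq] at this
  linarith

theorem sum_abs_le_sqrt_card_mul_norm {ι : Type*} [Fintype ι] (p : EuclideanSpace ℝ ι) :
    ∑ i, |p i| ≤ √(Fintype.card ι) * ‖p‖ := by
  simpa [EuclideanSpace.norm_eq] using Real.sum_mul_le_sqrt_mul_sqrt Finset.univ 1 (|p ·|)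

section SignCone

variable {ι : Type*}

def signCone (Ip Im : Set ι) : Set (EuclideanSpace ℝ ι) :=
  {w | (∀ i ∈ Ip, w i ≤ 0) ∧ (∀ i ∈ Im, 0 ≤ w i)}

variable {Ip Im : Set ι}

theorem zero_mem_signCone : (0 : EuclideanSpace ℝ ι) ∈ signCone Ip Im := by
  simp [signCone]

theorem convex_signCone : Convex ℝ (signCone Ip Im) := by
  rintro w ⟨hw₁, hw₂⟩ w' ⟨hw₁', hw₂'⟩ a b ha hb -
  refine ⟨fun i hi => ?_, fun i hi => ?_⟩ <;>
    simp only [PiLp.add_apply, PiLp.smul_apply, smul_eq_mul]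
  · nlinarith [hw₁ i hi, hw₁' i hi]
  · nlinarith [hw₂ i hi, hw₂' i hi]

variable [DecidableEq ι]

variable (Ip Im) in
def signConeGenerators : Set (EuclideanSpace ℝ ι) :=
  {d | (∃ i ∈ Ip, d = -(EuclideanSpace.single i (1 : ℝ)))
      ∨ (∃ i ∈ Im, d = EuclideanSpace.single i (1 : ℝ))
      ∨ (∃ i, i ∉ Ip ∧ i ∉ Im ∧
          (d = EuclideanSpace.single i (1 : ℝ) ∨ d = -(EuclideanSpace.single i (1 : ℝ))))}

variable [Fintype ι]

theorem exists_mem_signConeGenerators_mul_eq_inner_mul_abs {p : EuclideanSpace ℝ ι}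
    (hp : p ∈ signCone Ip Im) (i : ι) : ∃ d ∈ signConeGenerators Ip Im, ‖d‖ = 1 ∧
      ∀ v : EuclideanSpace ℝ ι, v i * p i = ⟪v, d⟫_ℝ * |p i| := by
  by_cases hip : i ∈ Ip
  · refine ⟨_, Or.inl ⟨i, hip, rfl⟩, by simp, fun v => ?_⟩
    simp [EuclideanSpace.inner_single_right, abs_of_nonpos (hp.1 i hip)]
  by_cases him : i ∈ Im
  · refine ⟨_, Or.inr (Or.inl ⟨i, him, rfl⟩), by simp, fun v => ?_⟩
    simp [EuclideanSpace.inner_single_right, abs_of_nonneg (hp.2 i him)]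
  rcases le_total 0 (p i) with hpi | hpi
  · refine ⟨_, Or.inr (Or.inr ⟨i, hip, him, Or.inl rfl⟩), by simp, fun v => ?_⟩
    simp [EuclideanSpace.inner_single_right, abs_of_nonneg hpi]
  · refine ⟨_, Or.inr (Or.inr ⟨i, hip, him, Or.inr rfl⟩), by simp, fun v => ?_⟩
    simp [EuclideanSpace.inner_single_right, abs_of_nonpos hpi]

theorem real_inner_le_mul_sum_abs_of_mem_signCone {v p : EuclideanSpace ℝ ι}
    {c : ℝ} (hp : p ∈ signCone Ip Im)
    (hv : ∀ d ∈ signConeGenerators Ip Im, ‖d‖ = 1 → ⟪v, d⟫_ℝ ≤ c) :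
    ⟪v, p⟫_ℝ ≤ c * ∑ i, |p i| := by
  rw [PiLp.inner_apply, Finset.mul_sum]
  refine Finset.sum_le_sum fun i _ => ?_
  obtain ⟨d, hd, hd1, hvd⟩ := exists_mem_signConeGenerators_mul_eq_inner_mul_abs hp i
  rw [real_inner_eq_re_inner, RCLike.inner_apply, conj_trivial, mul_comm, hvd v]
  exact mul_le_mul_of_nonneg_right (hv d hd hd1) (abs_nonneg _)

end SignCone

theorem stmt_10_general (n : ℕ) (hn : 1 ≤ n)
    (Ip Im : Set (Fin n))
    (Kpolar : Set (EuclideanSpace ℝ (Fin n)))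
    (hKpolar : Kpolar = {w | (∀ i ∈ Ip, w i ≤ 0) ∧ (∀ i ∈ Im, 0 ≤ w i)})
    (G : Set (EuclideanSpace ℝ (Fin n)))
    (hG : G = {d | (∃ i ∈ Ip, d = -(EuclideanSpace.single i (1 : ℝ)))
        ∨ (∃ i ∈ Im, d = EuclideanSpace.single i (1 : ℝ))
        ∨ (∃ i, i ∉ Ip ∧ i ∉ Im ∧
            (d = EuclideanSpace.single i (1 : ℝ) ∨ d = -(EuclideanSpace.single i (1 : ℝ))))})
    (f : EuclideanSpace ℝ (Fin n) → ℝ)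
    (hdiff : Differentiable ℝ f)
    (L : ℝ)
    (hLip : ∀ y z : EuclideanSpace ℝ (Fin n),
      ‖gradient f y - gradient f z‖ ≤ L * ‖y - z‖)
    (x : EuclideanSpace ℝ (Fin n)) (Δ : ℝ) (hΔ : 0 < Δ)
    (hfail : ∀ d ∈ G, f x ≤ f (x + Δ • d) + Δ ^ 2)
    (p : EuclideanSpace ℝ (Fin n))
    (hpmem : p ∈ Kpolar)
    (hpproj : ∀ q ∈ Kpolar, ‖-gradient f x - p‖ ≤ ‖-gradient f x - q‖) :
    ‖p‖ ≤ Real.sqrt n * (L + 1) * Δ := by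
  subst hKpolar hG
  have : Nonempty (Fin n) := ⟨⟨0, hn⟩⟩
  have hL : 0 ≤ L := nonneg_of_forall_norm_sub_le_mul hLip
  have hdescent : ∀ d ∈ signConeGenerators Ip Im, ‖d‖ = 1 →
      ⟪-gradient f x, d⟫_ℝ ≤ (L + 1) * Δ := fun d hd hd1 =>
    inner_neg_gradient_le_of_le_add_sq hdiff hL (hLip · x) hd1 hΔ (hfail d hd)
  have hproj : ‖p‖ ^ 2 ≤ ⟪-gradient f x, p⟫_ℝ :=
    norm_sq_le_real_inner_of_isMinOn convex_signCone zero_mem_signCone hpmem hpproj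
  have hinner := real_inner_le_mul_sum_abs_of_mem_signCone hpmem hdescent
  have hl1 := sum_abs_le_sqrt_card_mul_norm p
  rw [Fintype.card_fin] at hl1
  have hc : 0 ≤ (L + 1) * Δ := by positivity
  nlinarith [mul_le_mul_of_nonneg_left hl1 hc, norm_nonneg p, mul_nonneg (Real.sqrt_nonneg n) hc]

/-- If no generator of K° attains sufficient decrease, then
  ‖[−∇f(x)]_{K°}‖ ≤ √n · (L + 1) · Δ. -/
theorem stmt_10 (n : ℕ) (hn : 1 ≤ n)
    (Ip Im : Set (Fin n)) (hdisj : Disjoint Ip Im)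
    (Kpolar : Set (EuclideanSpace ℝ (Fin n)))
    (hKpolar : Kpolar = {w | (∀ i ∈ Ip, w i ≤ 0) ∧ (∀ i ∈ Im, 0 ≤ w i)})
    (G : Set (EuclideanSpace ℝ (Fin n)))
    (hG : G = {d | (∃ i ∈ Ip, d = -(EuclideanSpace.single i (1 : ℝ)))
        ∨ (∃ i ∈ Im, d = EuclideanSpace.single i (1 : ℝ))
        ∨ (∃ i, i ∉ Ip ∧ i ∉ Im ∧
            (d = EuclideanSpace.single i (1 : ℝ) ∨ d = -(EuclideanSpace.single i (1 : ℝ))))})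
    (f : EuclideanSpace ℝ (Fin n) → ℝ)
    (hdiff : Differentiable ℝ f)
    (L : ℝ)
    (hLip : ∀ y z : EuclideanSpace ℝ (Fin n),
      ‖gradient f y - gradient f z‖ ≤ L * ‖y - z‖)
    (x : EuclideanSpace ℝ (Fin n)) (Δ : ℝ) (hΔ : 0 < Δ)
    (hfail : ∀ d ∈ G, f x ≤ f (x + Δ • d) + Δ ^ 2)
    (p : EuclideanSpace ℝ (Fin n))
    (hpmem : p ∈ Kpolar)
    (hpproj : ∀ q ∈ Kpolar, ‖-gradient f x - p‖ ≤ ‖-gradient f x - q‖) :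
    ‖p‖ ≤ Real.sqrt n * (L + 1) * Δ :=
  stmt_10_general n hn Ip Im Kpolar hKpolar G hG f hdiff L hLip x Δ hΔ hfail p hpmem hpproj
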